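/- Let ζ be the unique real root in the interval (2/5, 1/2) of x³ − 3x² + (3/2)x − 1/6 = 0, and define R(z) = (1 + (1 − 3ζ)z + (3ζ² − 3ζ + 1/2)z²)/(1 − ζz)³. Then for every c ≥ 0 and every θ ∈ ℝ, setting z(θ) = −(c/6)·(e^{−2iθ} − 6e^{−iθ} + 3 + 2e^{iθ}), one has |R(z(θ))| ≤ 1. That is, the implicit scheme combining the third-order L-stable SDIRK method with the third-order upwind-biased finite-difference discretization of ∂_t u + a ∂_x u = 0 on a periodic grid is unconditionally stable: every eigenvalue of the time stepper Φ has modulus at most 1 for every CFL number c = aΔt/Δx ≥ 0. -/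

import Mathlib

/-!
The symbol `z(θ)` of the upwind-biased stencil has real part `-(c/3)(1 - cos θ)²`, so it lies in
the closed left half-plane, and the SDIRK stability function is A-stable for `ζ ∈ [2/5, 1/2]`.
For the latter, write `x = Re z ≤ 0` and `r = |z|²`: then `|1 - ζz|⁶ - |N(z)|²`, with `N` the
numerator, is a polynomial in `-x` and `r` all of whose coefficients are nonnegative there.
-/

open Complex

theorem normSq_one_add_mul_add_mul_sq (a b : ℝ) (z : ℂ) :
    normSq (1 + a * z + b * z ^ 2) = 1 + 2 * a * z.re + (a ^ 2 - 2 * b) * normSq z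
      + 4 * b * z.re ^ 2 + 2 * a * b * z.re * normSq z + b ^ 2 * normSq z ^ 2 := by
  simp [normSq_apply, pow_two]
  ring

theorem normSq_one_sub_mul (a : ℝ) (z : ℂ) :
    normSq (1 - a * z) = 1 - 2 * a * z.re + a ^ 2 * normSq z := by
  simp [normSq_apply]
  ring

noncomputable def upwindSymbol (c θ : ℝ) : ℂ :=
  -((c : ℂ) / 6) *
    (exp (-(2 * I * θ)) - 6 * exp (-(I * θ)) + 3 + 2 * exp (I * θ))

theorem re_upwindSymbol (c θ : ℝ) :
    (upwindSymbol c θ).re = -(c / 3) * (1 - Real.cos θ) ^ 2 := by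
  simp [upwindSymbol, exp_re, Real.cos_two_mul]
  ring

theorem re_upwindSymbol_nonpos {c : ℝ} (hc : 0 ≤ c) (θ : ℝ) : (upwindSymbol c θ).re ≤ 0 := by
  rw [re_upwindSymbol]
  have : 0 ≤ c / 3 * (1 - Real.cos θ) ^ 2 := by positivity
  linarith

noncomputable def sdirkStabilityFun (ζ : ℝ) (z : ℂ) : ℂ :=
  (1 + (1 - 3 * (ζ : ℂ)) * z + (3 * (ζ : ℂ) ^ 2 - 3 * (ζ : ℂ) + 1 / 2) * z ^ 2) /
    (1 - (ζ : ℂ) * z) ^ 3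

theorem sdirk_polynomial_le {ζ a b x r : ℝ} (ha : a = 1 - 3 * ζ)
    (hb : b = 3 * ζ ^ 2 - 3 * ζ + 1 / 2) (hζ₁ : 2 / 5 ≤ ζ) (hζ₂ : ζ ≤ 1 / 2) (hx : x ≤ 0)
    (hr : 0 ≤ r) :
    1 + 2 * a * x + (a ^ 2 - 2 * b) * r + 4 * b * x ^ 2 + 2 * a * b * x * r + b ^ 2 * r ^ 2
      ≤ (1 - 2 * ζ * x + ζ ^ 2 * r) ^ 3 := by
  have key : (1 - 2 * ζ * x + ζ ^ 2 * r) ^ 3 -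
      (1 + 2 * a * x + (a ^ 2 - 2 * b) * r + 4 * b * x ^ 2 + 2 * a * b * x * r + b ^ 2 * r ^ 2)
      = 2 * -x + (12 * ζ - 2) * x ^ 2 + (-6 * ζ ^ 3 + 24 * ζ ^ 2 - 9 * ζ + 1) * (-x * r)
        + (3 * ζ ^ 4 - b ^ 2) * r ^ 2 + 8 * ζ ^ 3 * (-x) ^ 3 + 12 * ζ ^ 4 * (x ^ 2 * r)
        + 6 * ζ ^ 5 * (-x * r ^ 2) + ζ ^ 6 * r ^ 3 := by
    subst ha hb
    ring
  have hu : 0 ≤ -x := by linarith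
  have hζ : 0 ≤ ζ := by linarith
  have c₂ : 0 ≤ 12 * ζ - 2 := by linarith
  have c₃ : 0 ≤ -6 * ζ ^ 3 + 24 * ζ ^ 2 - 9 * ζ + 1 := by nlinarith
  -- `b = 3(ζ - 1/2)² - 1/4 ∈ [-1/4, 0]`, while `3ζ⁴ ≥ 3(2/5)⁴ > 1/16`.
  have c₄ : 0 ≤ 3 * ζ ^ 4 - b ^ 2 := by
    have hb₂ : b ^ 2 ≤ (1 / 4) ^ 2 := sq_le_sq' (by nlinarith) (by nlinarith)
    have hζ₄ : (2 / 5) ^ 4 ≤ ζ ^ 4 := by gcongr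
    linarith
  have hxr : 0 ≤ -x * r := mul_nonneg hu hr
  rw [← sub_nonneg, key]
  positivity

theorem norm_sdirkStabilityFun_le_one {ζ : ℝ} (hζ₁ : 2 / 5 ≤ ζ) (hζ₂ : ζ ≤ 1 / 2) {z : ℂ}
    (hz : z.re ≤ 0) : ‖sdirkStabilityFun ζ z‖ ≤ 1 := by
  have hden : 0 < normSq (1 - ζ * z) := by
    rw [normSq_one_sub_mul]
    nlinarith [normSq_nonneg z]
  have hnum : normSq (1 + (1 - 3 * (ζ : ℂ)) * z + (3 * (ζ : ℂ) ^ 2 - 3 * (ζ : ℂ) + 1 / 2) * z ^ 2)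
      ≤ normSq (1 - ζ * z) ^ 3 := by
    have h := normSq_one_add_mul_add_mul_sq (1 - 3 * ζ) (3 * ζ ^ 2 - 3 * ζ + 1 / 2) z
    push_cast at h
    rw [h, normSq_one_sub_mul]
    exact sdirk_polynomial_le rfl rfl hζ₁ hζ₂ hz (normSq_nonneg z)
  rw [← sq_le_one_iff₀ (norm_nonneg _), Complex.sq_norm, sdirkStabilityFun, map_div₀, map_pow,
    div_le_one (pow_pos hden 3)]
  exact hnum

theorem stmt_14_general (ζ : ℝ) (hζ1 : 2 / 5 < ζ) (hζ2 : ζ < 1 / 2)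
    (R : ℂ → ℂ)
    (hR : ∀ z : ℂ, R z =
      (1 + (1 - 3 * (ζ : ℂ)) * z + (3 * (ζ : ℂ) ^ 2 - 3 * (ζ : ℂ) + 1 / 2) * z ^ 2) /
        (1 - (ζ : ℂ) * z) ^ 3) :
    ∀ c : ℝ, 0 ≤ c → ∀ θ : ℝ, ∀ z : ℂ,
      z = -((c : ℂ) / 6) *
        (Complex.exp (-(2 * Complex.I * θ)) - 6 * Complex.exp (-(Complex.I * θ)) + 3 +
          2 * Complex.exp (Complex.I * θ)) →
      ‖R z‖ ≤ 1 := by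
  intro c hc θ z hz
  subst hz
  rw [hR]
  exact norm_sdirkStabilityFun_le_one hζ1.le hζ2.le (re_upwindSymbol_nonpos hc θ)

/-- Unconditional stability of the implicit scheme pairing the third-order L-stable SDIRK
method (stability function `R(z) = (1 + (1 − 3ζ)z + (3ζ² − 3ζ + 1/2)z²)/(1 − ζz)³`, with
`ζ` the real root in `(2/5, 1/2)` of `x³ − 3x² + (3/2)x − 1/6 = 0`) with the third-order
upwind-biased finite-difference discretization of the advection equation (symbol
`z(θ) = −(c/6)(e^{−2iθ} − 6e^{−iθ} + 3 + 2e^{iθ})`): for every CFL number `c ≥ 0` and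
every frequency `θ`, `|R(z(θ))| ≤ 1`. -/
theorem stmt_14 (ζ : ℝ) (hζ1 : 2 / 5 < ζ) (hζ2 : ζ < 1 / 2)
    (hroot : ζ ^ 3 - 3 * ζ ^ 2 + (3 / 2) * ζ - 1 / 6 = 0)
    (R : ℂ → ℂ)
    (hR : ∀ z : ℂ, R z =
      (1 + (1 - 3 * (ζ : ℂ)) * z + (3 * (ζ : ℂ) ^ 2 - 3 * (ζ : ℂ) + 1 / 2) * z ^ 2) /
        (1 - (ζ : ℂ) * z) ^ 3) :
    ∀ c : ℝ, 0 ≤ c → ∀ θ : ℝ, ∀ z : ℂ,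
      z = -((c : ℂ) / 6) *
        (Complex.exp (-(2 * Complex.I * θ)) - 6 * Complex.exp (-(Complex.I * θ)) + 3 +
          2 * Complex.exp (Complex.I * θ)) →
      ‖R z‖ ≤ 1 :=
  stmt_14_general ζ hζ1 hζ2 R hR
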